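/- arXiv:1511.06888 — 3 statements merged into one kernel-verified Lean document; each statement's English description precedes it below -/
import Mathlib

section
/- There exists an optimal solution to the joint cell activation, user association and channel allocation problem that activates at most K + B + 1 patterns; i.e., if the problem min over (α, π) of Σ_b [(1−q_b)ρ_b P_b + q_b |ρ_b|₀ P_b] subject to ρ_b = Σ_{k,i} α_{kbi}, Σ_{i,b} α_{kbi} r_{kbi} ≥ d_k for all k, Σ_k α_{kbi} ≤ π_i for all b,i, Σ_i π_i = 1, and α, π ≥ 0 has an optimal solution, then it has an optimal solution with |{i : π_i > 0}| ≤ K + B + 1. -/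
/-- Feasibility for the joint cell activation / user association / channel
allocation problem. -/
def EnergyFeasible {K B I : Type*} [Fintype K] [Fintype B] [Fintype I]
    (r : K → B → I → ℝ) (d : K → ℝ)
    (α : K → B → I → ℝ) (π : I → ℝ) : Prop :=
  (∀ k b i, 0 ≤ α k b i) ∧ (∀ i, 0 ≤ π i) ∧ (∑ i, π i = 1) ∧
  (∀ b i, ∑ k, α k b i ≤ π i) ∧
  (∀ k, d k ≤ ∑ i, ∑ b, α k b i * r k b i)

/-- Total power consumption objective with the ℓ0 fixed-power term. -/
noncomputable def EnergyObj {K B I : Type*} [Fintype K] [Fintype B] [Fintype I]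
    (P q : B → ℝ) (α : K → B → I → ℝ) : ℝ :=
  ∑ b, ((1 - q b) * (∑ k, ∑ i, α k b i) * P b +
    q b * (if (∑ k, ∑ i, α k b i) = 0 then 0 else 1) * P b)

/-!
Writing `α_{kbi} = π_i θ_{kbi}`, the rates and loads of `(α, π)` together form the point
`∑ i, π_i v_i ∈ ℝ^{K+B}`, a convex combination of vectors `v_i` that depend on `θ` only.
By Carathéodory's theorem the same point is a convex combination of at most `K + B + 1` of
the `v_i`; using these weights `π'` in place of `π` and `α' = π' θ` keeps every rate and
every load, hence feasibility and the objective value.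
-/

open Module

theorem exists_weights_sum_smul_eq_card_support_le {𝕜 E I : Type*} [Field 𝕜] [LinearOrder 𝕜]
    [IsStrictOrderedRing 𝕜] [AddCommGroup E] [Module 𝕜 E] [FiniteDimensional 𝕜 E] [Fintype I]
    (v : I → E) (w : I → 𝕜) (hw₀ : ∀ i, 0 ≤ w i) (hw₁ : ∑ i, w i = 1) :
    ∃ w' : I → 𝕜, (∀ i, 0 ≤ w' i) ∧ ∑ i, w' i = 1 ∧ ∑ i, w' i • v i = ∑ i, w i • v i ∧
      ∃ S : Finset I, S.card ≤ finrank 𝕜 E + 1 ∧ ∀ i ∉ S, w' i = 0 := by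
  classical
  obtain ⟨ι, _, z, c, hz, hind, hc₀, hc₁, hcz⟩ := eq_pos_convex_span_of_mem_convexHull
    (mem_convexHull_of_exists_fintype w v hw₀ hw₁ Set.mem_range_self rfl)
  choose g hg using fun j => hz (Set.mem_range_self j)
  -- push the Carathéodory weights `c` on `ι` forward to `I` along `g`
  refine ⟨fun i => ∑ j, if g j = i then c j else 0,
    fun i => Finset.sum_nonneg fun j _ => by split_ifs <;> simp [(hc₀ j).le], ?_, ?_,
    Finset.univ.image g, ?_, ?_⟩
  · rw [Finset.sum_comm]
    simpa using hc₁
  · simp only [Finset.sum_smul, ite_smul, zero_smul]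
    rw [Finset.sum_comm, ← hcz]
    simp [hg]
  · calc (Finset.univ.image g).card ≤ Fintype.card ι := Finset.card_image_le
      _ ≤ finrank 𝕜 (vectorSpan 𝕜 (Set.range z)) + 1 := hind.card_le_finrank_succ
      _ ≤ finrank 𝕜 E + 1 := by gcongr; exact Submodule.finrank_le _
  · intro i hi
    refine Finset.sum_eq_zero fun j _ => if_neg fun hgj => hi ?_
    exact Finset.mem_image.mpr ⟨j, Finset.mem_univ j, hgj⟩

namespace CellActivation

variable {K B I : Type*} [Fintype K] [Fintype B] [Fintype I]

def rate (r : K → B → I → ℝ) (α : K → B → I → ℝ) (k : K) : ℝ :=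
  ∑ i, ∑ b, α k b i * r k b i

def load (α : K → B → I → ℝ) (b : B) : ℝ :=
  ∑ k, ∑ i, α k b i

/-- The paper's `θ_{kbi} = α_{kbi} / π_i`; Lean's `x / 0 = 0` makes it vanish on unused
patterns. -/
noncomputable def normalize (α : K → B → I → ℝ) (π : I → ℝ) : K → B → I → ℝ :=
  fun k b i => α k b i / π i

def allocOfWeights (θ : K → B → I → ℝ) (c : I → ℝ) : K → B → I → ℝ :=
  fun k b i => c i * θ k b i

def patternVector (r θ : K → B → I → ℝ) (i : I) : K ⊕ B → ℝ :=
  Sum.elim (fun k => ∑ b, θ k b i * r k b i) (fun b => ∑ k, θ k b i)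

theorem finrank_patternSpace : finrank ℝ (K ⊕ B → ℝ) = Fintype.card K + Fintype.card B := by
  rw [Module.finrank_fintype_fun_eq_card, Fintype.card_sum]

theorem energyObj_eq_of_load_eq {P q : B → ℝ} {α α' : K → B → I → ℝ} (h : load α = load α') :
    EnergyObj P q α = EnergyObj P q α' := by
  have hb : ∀ b, ∑ k, ∑ i, α k b i = ∑ k, ∑ i, α' k b i := congrFun h
  simp only [EnergyObj, hb]

section Feasible

variable {r : K → B → I → ℝ} {d : K → ℝ} {α : K → B → I → ℝ} {π : I → ℝ}

theorem _root_.EnergyFeasible.eq_zero_of_weight_eq_zero (h : EnergyFeasible r d α π) {i : I}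
    (hi : π i = 0) (k : K) (b : B) : α k b i = 0 := by
  have hsum : ∑ k', α k' b i = 0 :=
    le_antisymm ((h.2.2.2.1 b i).trans_eq hi) (Finset.sum_nonneg fun k' _ => h.1 k' b i)
  exact (Finset.sum_eq_zero_iff_of_nonneg fun k' _ => h.1 k' b i).mp hsum k (Finset.mem_univ k)

theorem _root_.EnergyFeasible.allocOfWeights_normalize (h : EnergyFeasible r d α π) :
    allocOfWeights (normalize α π) π = α := by
  funext k b i
  by_cases hi : π i = 0
  · simp [allocOfWeights, hi, h.eq_zero_of_weight_eq_zero hi k b]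
  · exact mul_div_cancel₀ _ hi

theorem _root_.EnergyFeasible.normalize_nonneg (h : EnergyFeasible r d α π)
    (k : K) (b : B) (i : I) : 0 ≤ normalize α π k b i :=
  div_nonneg (h.1 k b i) (h.2.1 i)

theorem _root_.EnergyFeasible.sum_normalize_le_one (h : EnergyFeasible r d α π) (b : B) (i : I) :
    ∑ k, normalize α π k b i ≤ 1 := by
  simp only [normalize, ← Finset.sum_div]
  exact div_le_one_of_le₀ (h.2.2.2.1 b i) (h.2.1 i)

end Feasible

section Weights

variable {r θ : K → B → I → ℝ}

theorem sum_smul_patternVector_inl (c : I → ℝ) (k : K) :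
    (∑ i, c i • patternVector r θ i) (.inl k) = rate r (allocOfWeights θ c) k := by
  simp only [Finset.sum_apply, Pi.smul_apply, patternVector, Sum.elim_inl, smul_eq_mul,
    Finset.mul_sum, rate, allocOfWeights, mul_assoc]

theorem sum_smul_patternVector_inr (c : I → ℝ) (b : B) :
    (∑ i, c i • patternVector r θ i) (.inr b) = load (allocOfWeights θ c) b := by
  simp only [Finset.sum_apply, Pi.smul_apply, patternVector, Sum.elim_inr, smul_eq_mul,
    Finset.mul_sum, load, allocOfWeights]
  exact Finset.sum_comm

theorem rate_load_eq_of_sum_smul_patternVector_eq {c c' : I → ℝ}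
    (h : ∑ i, c i • patternVector r θ i = ∑ i, c' i • patternVector r θ i) :
    rate r (allocOfWeights θ c) = rate r (allocOfWeights θ c') ∧
      load (allocOfWeights θ c) = load (allocOfWeights θ c') := by
  constructor <;> funext x
  · simpa only [sum_smul_patternVector_inl] using congrFun h (.inl x)
  · simpa only [sum_smul_patternVector_inr] using congrFun h (.inr x)

theorem energyFeasible_allocOfWeights {d : K → ℝ} {c : I → ℝ}
    (hθ₀ : ∀ k b i, 0 ≤ θ k b i) (hθ₁ : ∀ b i, ∑ k, θ k b i ≤ 1)
    (hc₀ : ∀ i, 0 ≤ c i) (hc₁ : ∑ i, c i = 1) (hd : ∀ k, d k ≤ rate r (allocOfWeights θ c) k) :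
    EnergyFeasible r d (allocOfWeights θ c) c := by
  refine ⟨fun k b i => mul_nonneg (hc₀ i) (hθ₀ k b i), hc₀, hc₁, fun b i => ?_, hd⟩
  calc ∑ k, c i * θ k b i = c i * ∑ k, θ k b i := by rw [Finset.mul_sum]
    _ ≤ c i := mul_le_of_le_one_right (hc₀ i) (hθ₁ b i)

end Weights

end CellActivation

open CellActivation in
theorem stmt_4_general {K B I : Type*} [Fintype K] [Fintype B] [Fintype I]
    (r : K → B → I → ℝ) (d : K → ℝ) (P q : B → ℝ)
    (α : K → B → I → ℝ) (π : I → ℝ)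
    (hfeas : EnergyFeasible r d α π)
    (hopt : ∀ α' π', EnergyFeasible r d α' π' → EnergyObj P q α ≤ EnergyObj P q α') :
    ∃ (α' : K → B → I → ℝ) (π' : I → ℝ),
      EnergyFeasible r d α' π' ∧
      (∀ α'' π'', EnergyFeasible r d α'' π'' →
        EnergyObj P q α' ≤ EnergyObj P q α'') ∧
      ∃ S : Finset I, S.card ≤ Fintype.card K + Fintype.card B + 1 ∧
        ∀ i ∉ S, π' i = 0 := by
  set θ := normalize α π
  obtain ⟨π', hπ'₀, hπ'₁, hsum, S, hS, hπ'S⟩ :=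
    exists_weights_sum_smul_eq_card_support_le (patternVector r θ) π hfeas.2.1 hfeas.2.2.1
  obtain ⟨hrate, hload⟩ := rate_load_eq_of_sum_smul_patternVector_eq hsum
  rw [hfeas.allocOfWeights_normalize] at hrate hload
  have hfeas' : EnergyFeasible r d (allocOfWeights θ π') π' :=
    energyFeasible_allocOfWeights hfeas.normalize_nonneg hfeas.sum_normalize_le_one hπ'₀ hπ'₁
      fun k => hrate ▸ hfeas.2.2.2.2 k
  have hobj : EnergyObj P q (allocOfWeights θ π') = EnergyObj P q α := energyObj_eq_of_load_eq hload
  rw [finrank_patternSpace] at hS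
  exact ⟨_, π', hfeas', fun α'' π'' h => hobj ▸ hopt α'' π'' h, S, hS, hπ'S⟩

/-- Proposition 1: if the energy-saving problem has an optimal solution, it
has one activating at most K + B + 1 patterns. -/
theorem stmt_4 {K B I : Type*} [Fintype K] [Fintype B] [Fintype I]
    (r : K → B → I → ℝ) (d : K → ℝ) (P q : B → ℝ)
    (hr : ∀ k b i, 0 ≤ r k b i) (hd : ∀ k, 0 < d k)
    (hP : ∀ b, 0 < P b) (hq : ∀ b, q b ∈ Set.Icc (0:ℝ) 1)
    (α : K → B → I → ℝ) (π : I → ℝ)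
    (hfeas : EnergyFeasible r d α π)
    (hopt : ∀ α' π', EnergyFeasible r d α' π' → EnergyObj P q α ≤ EnergyObj P q α') :
    ∃ (α' : K → B → I → ℝ) (π' : I → ℝ),
      EnergyFeasible r d α' π' ∧
      (∀ α'' π'', EnergyFeasible r d α'' π'' →
        EnergyObj P q α' ≤ EnergyObj P q α'') ∧
      ∃ S : Finset I, S.card ≤ Fintype.card K + Fintype.card B + 1 ∧
        ∀ i ∉ S, π' i = 0 :=
  stmt_4_general r d P q α π hfeas hopt
end

section
/- Closed-form solution of the inner (pricing) problem: Consider minimizing L(α, π) = Σ_{k,b,i} α_{kbi}(w_b − r_{kbi} μ_k) + Σ_k d_k μ_k over the set X = {(α, π) : α_{kbi} ≥ 0, Σ_k α_{kbi} ≤ π_i ∀b,i, Σ_i π_i = 1, π_i ≥ 0}. Define r̃_{kbi} = w_b − r_{kbi} μ_k, k̄(b,i) = argmin_k r̃_{kbi}, and ī = argmin_i Σ_b min(0, r̃_{k̄(b,i),b,i}). Then the point with π_ī = 1 (other π_i = 0) and α_{kbi} = 1 exactly when i = ī, k = k̄(b, ī), and r̃_{kbi} < 0 (all other α zero) attains the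 minimum of L over X, and the minimum value is Σ_b min(0, r̃_{k̄(b,ī),b,ī}) + Σ_k d_k μ_k. -/
/-- The polytope X of the inner (pricing) problem. -/
def InnerX {K B I : Type*} [Fintype K] [Fintype B] [Fintype I]
    (α : K → B → I → ℝ) (π : I → ℝ) : Prop :=
  (∀ k b i, 0 ≤ α k b i) ∧ (∀ b i, ∑ k, α k b i ≤ π i) ∧
  (∀ i, 0 ≤ π i) ∧ (∑ i, π i = 1)

/-!
For fixed `π`, the block `∑ k, α k b i * c k b i` is at least `π i * min 0 (c (kbar b i) b i)`,
since the `α k b i` are nonnegative with total at most `π i`. Summing over `b` gives a convex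
combination, with weights `π`, of the pattern values `∑ b, min 0 (c (kbar b i) b i)`, hence at
least the smallest one; the greedy point puts all weight on `ibar` and attains it.
-/

open Finset

section

variable {K B I : Type*} [Fintype K] [Fintype B] [Fintype I]

theorem InnerX.mul_min_le_sum {α : K → B → I → ℝ} {π : I → ℝ} (h : InnerX α π)
    {c : K → B → I → ℝ} {kbar : B → I → K}
    (hkbar : ∀ b i k, c (kbar b i) b i ≤ c k b i)
    (b : B) (i : I) :
    π i * min 0 (c (kbar b i) b i) ≤ ∑ k, α k b i * c k b i :=
  calc π i * min 0 (c (kbar b i) b i)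
      ≤ (∑ k, α k b i) * min 0 (c (kbar b i) b i) :=
        mul_le_mul_of_nonpos_right (h.2.1 b i) (min_le_left _ _)
    _ = ∑ k, α k b i * min 0 (c (kbar b i) b i) := sum_mul _ _ _
    _ ≤ ∑ k, α k b i * c k b i := sum_le_sum fun k _ =>
        mul_le_mul_of_nonneg_left ((min_le_right _ _).trans (hkbar b i k)) (h.1 k b i)

theorem InnerX.sum_min_le_cost {α : K → B → I → ℝ} {π : I → ℝ} (h : InnerX α π)
    {c : K → B → I → ℝ} {kbar : B → I → K}
    (hkbar : ∀ b i k, c (kbar b i) b i ≤ c k b i)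
    {ibar : I}
    (hibar : ∀ i, ∑ b, min 0 (c (kbar b ibar) b ibar) ≤ ∑ b, min 0 (c (kbar b i) b i)) :
    ∑ b, min 0 (c (kbar b ibar) b ibar) ≤ ∑ k, ∑ b, ∑ i, α k b i * c k b i := by
  set M := ∑ b, min 0 (c (kbar b ibar) b ibar)
  calc M = ∑ i, π i * M := by rw [← sum_mul, h.2.2.2, one_mul]
    _ ≤ ∑ i, π i * ∑ b, min 0 (c (kbar b i) b i) :=
        sum_le_sum fun i _ => mul_le_mul_of_nonneg_left (hibar i) (h.2.2.1 i)
    _ = ∑ i, ∑ b, π i * min 0 (c (kbar b i) b i) := by simp only [mul_sum]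
    _ ≤ ∑ i, ∑ b, ∑ k, α k b i * c k b i :=
        sum_le_sum fun i _ => sum_le_sum fun b _ => h.mul_min_le_sum hkbar b i
    _ = ∑ k, ∑ b, ∑ i, α k b i * c k b i := by
        rw [sum_comm]; simp_rw [sum_comm (γ := I)]; exact sum_comm

variable [DecidableEq K] [DecidableEq I]

noncomputable def greedyAlpha (c : K → B → I → ℝ) (kbar : B → I → K) (ibar : I) :
    K → B → I → ℝ :=
  fun k b i => if i = ibar ∧ k = kbar b ibar ∧ c k b i < 0 then 1 else 0

theorem innerX_greedyAlpha (c : K → B → I → ℝ) (kbar : B → I → K) (ibar : I) :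
    InnerX (greedyAlpha c kbar ibar) (fun i => if i = ibar then 1 else 0) := by
  refine ⟨fun k b i => by unfold greedyAlpha; split_ifs <;> norm_num, fun b i => ?_,
    fun i => by beta_reduce; split_ifs <;> norm_num, by simp⟩
  by_cases hi : i = ibar
  · subst hi
    calc ∑ k, greedyAlpha c kbar i k b i ≤ ∑ k, if k = kbar b i then (1 : ℝ) else 0 :=
          sum_le_sum fun k _ => by unfold greedyAlpha; split_ifs <;> simp_all
      _ = _ := by simp
  · simp [greedyAlpha, hi]

theorem sum_greedyAlpha_mul (c : K → B → I → ℝ) (kbar : B → I → K) (ibar : I) :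
    ∑ k, ∑ b, ∑ i, greedyAlpha c kbar ibar k b i * c k b i =
      ∑ b, min 0 (c (kbar b ibar) b ibar) := by
  rw [sum_comm]
  refine sum_congr rfl fun b _ => ?_
  simp only [greedyAlpha, ite_and, ite_mul, one_mul, zero_mul, sum_ite_eq', mem_univ,
    ↓reduceIte]
  exact (min_def_lt' 0 _).symm

end

theorem stmt_5_general {K B I : Type*} [Fintype K] [Fintype B] [Fintype I]
    [DecidableEq K] [DecidableEq I]
    (w : B → ℝ) (μ : K → ℝ) (r : K → B → I → ℝ) (d : K → ℝ)
    (kbar : B → I → K)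
    (hkbar : ∀ b i k, w b - r (kbar b i) b i * μ (kbar b i) ≤ w b - r k b i * μ k)
    (ibar : I)
    (hibar : ∀ i, ∑ b, min 0 (w b - r (kbar b ibar) b ibar * μ (kbar b ibar)) ≤
      ∑ b, min 0 (w b - r (kbar b i) b i * μ (kbar b i))) :
    let α : K → B → I → ℝ := fun k b i =>
      if i = ibar ∧ k = kbar b ibar ∧ w b - r k b i * μ k < 0 then 1 else 0
    let π : I → ℝ := fun i => if i = ibar then 1 else 0
    let L : (K → B → I → ℝ) → ℝ := fun a =>
      (∑ k, ∑ b, ∑ i, a k b i * (w b - r k b i * μ k)) + ∑ k, d k * μ k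
    InnerX α π ∧
    (∀ α' π', InnerX α' π' → L α ≤ L α') ∧
    L α = (∑ b, min 0 (w b - r (kbar b ibar) b ibar * μ (kbar b ibar))) +
      ∑ k, d k * μ k := by
  intro α π L
  set c : K → B → I → ℝ := fun k b i => w b - r k b i * μ k
  have hval : L α = (∑ b, min 0 (c (kbar b ibar) b ibar)) + ∑ k, d k * μ k :=
    congrArg (· + ∑ k, d k * μ k) (sum_greedyAlpha_mul c kbar ibar)
  refine ⟨innerX_greedyAlpha c kbar ibar, fun α' π' h => ?_, hval⟩
  rw [hval]
  exact add_le_add_left (h.sum_min_le_cost hkbar hibar) _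

/-- Proposition 2: the inner problem has the indicated closed-form global
minimizer, with optimal value Σ_b min(0, r̃_{k̄(b,ī) b ī}) + Σ_k d_k μ_k. -/
theorem stmt_5 {K B I : Type*} [Fintype K] [Fintype B] [Fintype I]
    [DecidableEq K] [DecidableEq I]
    (w : B → ℝ) (μ : K → ℝ) (hμ : ∀ k, 0 ≤ μ k)
    (r : K → B → I → ℝ) (d : K → ℝ)
    (kbar : B → I → K)
    (hkbar : ∀ b i k, w b - r (kbar b i) b i * μ (kbar b i) ≤ w b - r k b i * μ k)
    (ibar : I)
    (hibar : ∀ i, ∑ b, min 0 (w b - r (kbar b ibar) b ibar * μ (kbar b ibar)) ≤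
      ∑ b, min 0 (w b - r (kbar b i) b i * μ (kbar b i))) :
    let α : K → B → I → ℝ := fun k b i =>
      if i = ibar ∧ k = kbar b ibar ∧ w b - r k b i * μ k < 0 then 1 else 0
    let π : I → ℝ := fun i => if i = ibar then 1 else 0
    let L : (K → B → I → ℝ) → ℝ := fun a =>
      (∑ k, ∑ b, ∑ i, a k b i * (w b - r k b i * μ k)) + ∑ k, d k * μ k
    InnerX α π ∧
    (∀ α' π', InnerX α' π' → L α ≤ L α') ∧
    L α = (∑ b, min 0 (w b - r (kbar b ibar) b ibar * μ (kbar b ibar))) +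
      ∑ k, d k * μ k :=
  stmt_5_general w μ r d kbar hkbar ibar hibar
end

section
/- For the linear program min Σ_{k,b,i} α_{kbi}(w_b − r_{kbi} μ_k) over X = {(α,π) : α ≥ 0, Σ_k α_{kbi} ≤ π_i ∀b,i, π in the simplex}, the optimal value equals min over i ∈ I of Σ_b min(0, min_k (w_b − r_{kbi} μ_k)): i.e., the optimization over the polytope reduces to choosing a single best pattern and, within it, a single best user per base station (or none if all reduced costs are nonnegative). -/
open Finset

/-- Value of pattern `i` (indices: users `k`, base stations `b`, patterns `i`) when every base
station serves a cheapest user, or no one if all its costs are nonnegative. -/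
noncomputable def patternValue {K B I : Type*} [Fintype K] [Fintype B] [Nonempty K]
    (c : K → B → I → ℝ) (i : I) : ℝ :=
  ∑ b, min 0 (univ.inf' univ_nonempty fun k => c k b i)

theorem mul_le_sum_mul_of_sum_le {K : Type*} {s : Finset K} {a c : K → ℝ} {p m : ℝ}
    (ha : ∀ k ∈ s, 0 ≤ a k) (hsum : ∑ k ∈ s, a k ≤ p) (hm : m ≤ 0) (hmc : ∀ k ∈ s, m ≤ c k) :
    p * m ≤ ∑ k ∈ s, a k * c k :=
  calc p * m ≤ (∑ k ∈ s, a k) * m := mul_le_mul_of_nonpos_right hsum hm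
    _ = ∑ k ∈ s, a k * m := sum_mul _ _ _
    _ ≤ ∑ k ∈ s, a k * c k := sum_le_sum fun k hk => mul_le_mul_of_nonneg_left (hmc k hk) (ha k hk)

theorem inf'_le_sum_mul_of_sum_eq_one {I : Type*} {s : Finset I} (hs : s.Nonempty)
    {f p : I → ℝ} (hp : ∀ i ∈ s, 0 ≤ p i) (hp1 : ∑ i ∈ s, p i = 1) :
    s.inf' hs f ≤ ∑ i ∈ s, p i * f i :=
  calc s.inf' hs f = ∑ i ∈ s, p i * s.inf' hs f := by rw [← sum_mul, hp1, one_mul]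
    _ ≤ ∑ i ∈ s, p i * f i :=
      sum_le_sum fun i hi => mul_le_mul_of_nonneg_left (inf'_le f hi) (hp i hi)

theorem exists_sum_le_one_sum_mul_eq_min_zero_inf' {K : Type*} [Fintype K] [Nonempty K]
    (c : K → ℝ) :
    ∃ a : K → ℝ, (∀ k, 0 ≤ a k) ∧ ∑ k, a k ≤ 1 ∧
      ∑ k, a k * c k = min 0 (univ.inf' univ_nonempty c) := by
  classical
  obtain ⟨k₀, -, hk₀⟩ := exists_mem_eq_inf' univ_nonempty c
  rw [hk₀]
  rcases le_total 0 (c k₀) with hc | hc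
  · exact ⟨0, fun _ => le_rfl, by simp, by simp [min_eq_left hc]⟩
  · refine ⟨Pi.single k₀ 1, fun k => ?_, by simp, by simp [Pi.single_apply, min_eq_right hc]⟩
    rw [Pi.single_apply]
    split_ifs <;> norm_num

section InnerLP

variable {K B I : Type*} [Fintype K] [Fintype B] [Fintype I] [Nonempty K]

theorem inf'_patternValue_le_objective [Nonempty I] (c : K → B → I → ℝ)
    {α : K → B → I → ℝ} {π : I → ℝ} (hX : InnerX α π) :
    univ.inf' univ_nonempty (patternValue c) ≤ ∑ k, ∑ b, ∑ i, α k b i * c k b i := by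
  obtain ⟨hα, hsum, hπ, hπ1⟩ := hX
  have hcell : ∀ b i, π i * min 0 (univ.inf' univ_nonempty fun k => c k b i)
      ≤ ∑ k, α k b i * c k b i := fun b i =>
    mul_le_sum_mul_of_sum_le (fun k _ => hα k b i) (hsum b i) (min_le_left _ _)
      fun k _ => (min_le_right _ _).trans (inf'_le _ (mem_univ k))
  calc univ.inf' univ_nonempty (patternValue c) ≤ ∑ i, π i * patternValue c i :=
        inf'_le_sum_mul_of_sum_eq_one _ (fun i _ => hπ i) hπ1
    _ = ∑ i, ∑ b, π i * min 0 (univ.inf' univ_nonempty fun k => c k b i) := by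
        simp only [patternValue, mul_sum]
    _ ≤ ∑ i, ∑ b, ∑ k, α k b i * c k b i := sum_le_sum fun i _ => sum_le_sum fun b _ => hcell b i
    _ = ∑ b, ∑ i, ∑ k, α k b i * c k b i := sum_comm
    _ = ∑ b, ∑ k, ∑ i, α k b i * c k b i := sum_congr rfl fun _ _ => sum_comm
    _ = ∑ k, ∑ b, ∑ i, α k b i * c k b i := sum_comm

theorem exists_innerX_objective_eq_patternValue (c : K → B → I → ℝ) (i₀ : I) :
    ∃ (α : K → B → I → ℝ) (π : I → ℝ), InnerX α π ∧
      ∑ k, ∑ b, ∑ i, α k b i * c k b i = patternValue c i₀ := by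
  classical
  choose a ha hsum hval using fun b => exists_sum_le_one_sum_mul_eq_min_zero_inf' fun k => c k b i₀
  refine ⟨fun k b i => if i = i₀ then a b k else 0, fun i => if i = i₀ then 1 else 0,
    ⟨fun k b i => ?_, fun b i => ?_, fun i => ?_, by simp⟩, ?_⟩
  · dsimp only; split_ifs <;> simp [ha]
  · dsimp only; split_ifs <;> simp [hsum]
  · dsimp only; split_ifs <;> norm_num
  · simp only [ite_mul, zero_mul, sum_ite_eq', mem_univ, if_true]
    rw [sum_comm]
    exact sum_congr rfl fun b _ => hval b

theorem isLeast_innerX_objective [Nonempty I] (c : K → B → I → ℝ) :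
    IsLeast {v : ℝ | ∃ (α : K → B → I → ℝ) (π : I → ℝ), InnerX α π ∧
        v = ∑ k, ∑ b, ∑ i, α k b i * c k b i}
      (univ.inf' univ_nonempty (patternValue c)) := by
  refine ⟨?_, ?_⟩
  · obtain ⟨i₀, -, hi₀⟩ := exists_mem_eq_inf' univ_nonempty (patternValue c)
    obtain ⟨α, π, hX, hα⟩ := exists_innerX_objective_eq_patternValue c i₀
    exact ⟨α, π, hX, hi₀.trans hα.symm⟩
  · rintro v ⟨α, π, hX, rfl⟩
    exact inf'_patternValue_le_objective c hX

end InnerLP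

theorem stmt_6_general {K B I : Type*} [Fintype K] [Fintype B] [Fintype I]
    [Nonempty K] [Nonempty I]
    (w : B → ℝ) (μ : K → ℝ) (r : K → B → I → ℝ) :
    IsLeast {v : ℝ | ∃ (α : K → B → I → ℝ) (π : I → ℝ), InnerX α π ∧
        v = ∑ k, ∑ b, ∑ i, α k b i * (w b - r k b i * μ k)}
      (Finset.univ.inf' Finset.univ_nonempty (fun i : I =>
        ∑ b, min 0 (Finset.univ.inf' Finset.univ_nonempty
          (fun k : K => w b - r k b i * μ k)))) :=
  isLeast_innerX_objective fun k b i => w b - r k b i * μ k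

/-- The optimal value of the inner LP over X equals
min_{i} Σ_b min(0, min_k (w_b − r_{kbi} μ_k)). -/
theorem stmt_6 {K B I : Type*} [Fintype K] [Fintype B] [Fintype I]
    [Nonempty K] [Nonempty I]
    (w : B → ℝ) (μ : K → ℝ) (hμ : ∀ k, 0 ≤ μ k) (r : K → B → I → ℝ) :
    IsLeast {v : ℝ | ∃ (α : K → B → I → ℝ) (π : I → ℝ), InnerX α π ∧
        v = ∑ k, ∑ b, ∑ i, α k b i * (w b - r k b i * μ k)}
      (Finset.univ.inf' Finset.univ_nonempty (fun i : I =>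
        ∑ b, min 0 (Finset.univ.inf' Finset.univ_nonempty
          (fun k : K => w b - r k b i * μ k)))) :=
  stmt_6_general w μ r
end
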